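/- Consider the integer program min{f(x) : Ax = b, l ≤ x ≤ u, x ∈ ℤ^n} with A ∈ ℤ^{m×n}, b ∈ ℤ^m, finite bounds l, u ∈ ℤ^n, and a separable convex objective function f : ℝ^n → ℝ. Let z₀ be a feasible solution and let z* be an optimal solution with f(z₀) > f(z*). Then there exist an element y of the Graver basis of A and a positive integer λ such that z₀ + λy is feasible and f(z₀) − f(z₀ + λy) ≥ (f(z₀) − f(z*)) / (2n). -/

import Mathlib

/-- Two integer vectors are sign-compatible if they agree in sign componentwise. -/
def SignCompat {ι : Type*} (u v : ι → ℤ) : Prop := ∀ i, 0 ≤ u i * v i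

/-- A cycle of an integer matrix `A` is an integer vector in its kernel. -/
def IsCycle {R C : Type*} [Fintype C] (A : Matrix R C ℤ) (y : C → ℤ) : Prop :=
  A.mulVec y = 0

/-- The Graver basis of `A` consists of the nonzero cycles of `A` that cannot be
written as the sum of two sign-compatible nonzero cycles of `A`. -/
def InGraverBasis {R C : Type*} [Fintype C] (A : Matrix R C ℤ) (y : C → ℤ) : Prop :=
  IsCycle A y ∧ y ≠ 0 ∧
    ¬ ∃ u v : C → ℤ, IsCycle A u ∧ IsCycle A v ∧ u ≠ 0 ∧ v ≠ 0 ∧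
      SignCompat u v ∧ y = u + v

/-- A point `x ∈ ℤ^n` is feasible if `Ax = b` and `l ≤ x ≤ u` componentwise. -/
def IsFeasibleZ {m n : ℕ} (A : Matrix (Fin m) (Fin n) ℤ) (b : Fin m → ℤ)
    (l u : Fin n → ℤ) (x : Fin n → ℤ) : Prop :=
  A.mulVec x = b ∧ ∀ j, l j ≤ x j ∧ x j ≤ u j

/-!
The difference `w = z* - z₀` is a nonzero cycle of `A`. By Sebő's integral Carathéodory bound,
`w = ∑ λᵢ gᵢ` with Graver elements `gᵢ ⊑ w` of which fewer than `2n` are distinct: a vertex `μ` of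
the polytope of nonnegative real weights on the Graver elements conformal to `w` that combine to
`w`, chosen to maximise `∑ μ_g`, has linearly independent support, hence at most `n` nonzero
weights; rounding `μ` down and decomposing the remainder into Graver elements adds fewer new
elements than that support has, by maximality of `∑ μ_g`.

The pieces `λᵢ gᵢ` are pairwise sign-compatible, and a separable convex function is superadditive on
such sums, so the gains `f(z₀) - f(z₀ + λᵢ gᵢ)` add up to at least `f(z₀) - f(z*)`. One of the
fewer than `2n` pieces gains at least a `2n`-th of it, and `z₀ + λᵢ gᵢ` is feasible since it lies in
the box spanned by `z₀` and `z*`.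
-/

open Finset

theorem mem_uIcc_zero_iff_mul_sub_nonneg {α : Type*} [Ring α] [LinearOrder α]
    [IsStrictOrderedRing α] {a c : α} : a ∈ Set.uIcc 0 c ↔ 0 ≤ a * (c - a) := by
  rw [mul_nonneg_iff, sub_nonneg, sub_nonpos, Set.mem_uIcc, and_comm (a := c ≤ a)]

theorem sum_mul_mem_uIcc_zero {α κ : Type*} [Ring α] [LinearOrder α] [IsStrictOrderedRing α]
    {s : Finset κ} {a b x : κ → α} {c : α} (hab : ∀ k ∈ s, 0 ≤ a k ∧ a k ≤ b k)
    (hx : ∀ k ∈ s, x k ∈ Set.uIcc 0 c) (hc : ∑ k ∈ s, b k * x k = c) :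
    ∑ k ∈ s, a k * x k ∈ Set.uIcc 0 c := by
  rcases le_total 0 c with h | h
  · simp only [Set.uIcc_of_le h, Set.mem_Icc] at hx ⊢
    exact ⟨sum_nonneg fun k hk => mul_nonneg (hab k hk).1 (hx k hk).1,
      hc ▸ sum_le_sum fun k hk => mul_le_mul_of_nonneg_right (hab k hk).2 (hx k hk).1⟩
  · simp only [Set.uIcc_of_ge h, Set.mem_Icc] at hx ⊢
    exact ⟨hc ▸ sum_le_sum fun k hk => mul_le_mul_of_nonpos_right (hab k hk).2 (hx k hk).2,
      sum_nonpos fun k hk => mul_nonpos_of_nonneg_of_nonpos (hab k hk).1 (hx k hk).2⟩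

section Conformal

variable {ι : Type*}

/-- The conformal order of the Graver literature: `0 ≤ xᵢ yᵢ` and `|xᵢ| ≤ |yᵢ|` for all `i`. -/
def IsConformal (x y : ι → ℤ) : Prop := ∀ i, x i ∈ Set.uIcc 0 (y i)

infix:50 " ⊑ " => IsConformal

theorem isConformal_add_of_signCompat {x y : ι → ℤ} (h : SignCompat x y) : x ⊑ x + y :=
  fun i => mem_uIcc_zero_iff_mul_sub_nonneg.2 (by simpa using h i)

theorem IsConformal.trans {x y z : ι → ℤ} (hxy : x ⊑ y) (hyz : y ⊑ z) : x ⊑ z :=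
  fun i => Set.uIcc_subset_uIcc Set.left_mem_uIcc (hyz i) (hxy i)

theorem IsConformal.signCompat {x y w : ι → ℤ} (hx : x ⊑ w) (hy : y ⊑ w) : SignCompat x y := by
  intro i
  have hx := hx i
  have hy := hy i
  rcases le_total 0 (w i) with hw | hw
  · rw [Set.uIcc_of_le hw] at hx hy
    exact mul_nonneg hx.1 hy.1
  · rw [Set.uIcc_of_ge hw] at hx hy
    exact mul_nonneg_of_nonpos_of_nonpos hx.2 hy.2

theorem SignCompat.smul {x y : ι → ℤ} (h : SignCompat x y) {a b : ℤ} (ha : 0 ≤ a)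
    (hb : 0 ≤ b) : SignCompat (a • x) (b • y) := fun i => by
  simpa [mul_mul_mul_comm] using mul_nonneg (mul_nonneg ha hb) (h i)

theorem isConformal_of_sum_eq {κ : Type*} {s : Finset κ} {x : κ → ι → ℤ}
    (hx : ∀ k ∈ s, ∀ k' ∈ s, SignCompat (x k) (x k')) {k : κ} (hk : k ∈ s) :
    x k ⊑ ∑ k' ∈ s, x k' := by
  classical
  intro i
  rw [mem_uIcc_zero_iff_mul_sub_nonneg, Finset.sum_apply, ← add_sum_erase s _ hk,
    add_sub_cancel_left, mul_sum]
  exact sum_nonneg fun k' hk' => hx k hk k' (mem_of_mem_erase hk') i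

theorem IsConformal.sub_left {x w : ι → ℤ} (h : x ⊑ w) : w - x ⊑ w := fun i => by
  have := mem_uIcc_zero_iff_mul_sub_nonneg.1 (h i)
  rw [mem_uIcc_zero_iff_mul_sub_nonneg, Pi.sub_apply, sub_sub_cancel, mul_comm]
  exact this

theorem IsConformal.sign_mul_eq_abs {x w : ι → ℤ} (h : x ⊑ w) (i : ι) :
    (w i).sign * x i = |x i| := by
  have hx := h i
  rcases lt_trichotomy (w i) 0 with hw | hw | hw
  · rw [Set.uIcc_of_ge hw.le] at hx
    rw [Int.sign_eq_neg_one_of_neg hw, abs_of_nonpos hx.2, neg_one_mul]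
  · simp_all
  · rw [Set.uIcc_of_le hw.le] at hx
    rw [Int.sign_eq_one_of_pos hw, abs_of_nonneg hx.1, one_mul]

theorem one_le_sum_abs [Fintype ι] {x : ι → ℤ} (hx : x ≠ 0) : 1 ≤ ∑ i, |x i| := by
  obtain ⟨i, hi⟩ := Function.ne_iff.1 hx
  exact (Int.one_le_abs hi).trans (single_le_sum (fun j _ => abs_nonneg (x j)) (mem_univ i))

theorem IsConformal.finite_setOf [Finite ι] (w : ι → ℤ) : {x : ι → ℤ | x ⊑ w}.Finite :=
  Set.Finite.pi' fun i => Set.finite_uIcc 0 (w i)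

end Conformal

section Pottier

variable {ι : Type*} [Fintype ι]

theorem SignCompat.sum_natAbs_lt {u v : ι → ℤ} (h : SignCompat u v) (hv : v ≠ 0) :
    ∑ i, (u i).natAbs < ∑ i, ((u + v) i).natAbs := by
  have hadd : ∀ i, ((u + v) i).natAbs = (u i).natAbs + (v i).natAbs := fun i => by
    rcases mul_nonneg_iff.1 (h i) with ⟨hu, hv⟩ | ⟨hu, hv⟩ <;> simp only [Pi.add_apply] <;> omega
  obtain ⟨i, hi⟩ := Function.ne_iff.1 hv
  refine sum_lt_sum (fun i _ => (hadd i).symm ▸ Nat.le_add_right _ _) ⟨i, mem_univ i, ?_⟩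
  rw [hadd i]
  have : 0 < (v i).natAbs := Int.natAbs_pos.2 hi
  omega

theorem exists_graver_decomposition {R : Type*} (A : Matrix R ι ℤ) {y : ι → ℤ}
    (hy : IsCycle A y) :
    ∃ s : Multiset (ι → ℤ), (∀ g ∈ s, InGraverBasis A g ∧ g ⊑ y) ∧ s.sum = y := by
  induction hN : ∑ i, (y i).natAbs using Nat.strong_induction_on generalizing y with
  | _ N ih =>
  by_cases hy0 : y = 0
  · exact ⟨0, by simp, by simp [hy0]⟩
  by_cases hg : InGraverBasis A y
  · exact ⟨{y}, by simpa using ⟨hg, fun i => Set.right_mem_uIcc⟩, Multiset.sum_singleton y⟩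
  obtain ⟨u, v, hu, hv, hu0, hv0, huv, rfl⟩ : ∃ u v : ι → ℤ, IsCycle A u ∧ IsCycle A v ∧
      u ≠ 0 ∧ v ≠ 0 ∧ SignCompat u v ∧ y = u + v := by
    simpa [InGraverBasis, hy, hy0] using hg
  have hvu : SignCompat v u := fun i => mul_comm (u i) (v i) ▸ huv i
  have hltv := hvu.sum_natAbs_lt hu0
  rw [add_comm v u, hN] at hltv
  obtain ⟨s, hs, rfl⟩ := ih _ (hN ▸ huv.sum_natAbs_lt hv0) hu rfl
  obtain ⟨t, ht, rfl⟩ := ih _ hltv hv rfl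
  refine ⟨s + t, fun g hg => ?_, Multiset.sum_add s t⟩
  rcases Multiset.mem_add.1 hg with hg | hg
  · exact ⟨(hs g hg).1, (hs g hg).2.trans (isConformal_add_of_signCompat huv)⟩
  · rw [add_comm]
    exact ⟨(ht g hg).1, (ht g hg).2.trans (isConformal_add_of_signCompat hvu)⟩

end Pottier

section Superadditivity

theorem ConvexOn.map_add_add_le {φ : ℝ → ℝ} (hφ : ConvexOn ℝ Set.univ φ) (x : ℝ) {a b : ℝ}
    (hab : 0 ≤ a * b) : φ (x + a) + φ (x + b) ≤ φ (x + (a + b)) + φ x := by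
  by_cases hs : a + b = 0
  · obtain rfl : a = 0 := by nlinarith
    obtain rfl : b = 0 := by linarith
    simp
  have weight_nonneg : ∀ a b : ℝ, 0 ≤ a * b → 0 ≤ a / (a + b) := fun a b hab =>
    div_nonneg_iff.2 <| (le_or_gt 0 (a + b)).imp (fun h => ⟨by nlinarith, h⟩)
      (fun h => ⟨by nlinarith, h.le⟩)
  have hp := weight_nonneg a b hab
  have hq : 0 ≤ b / (a + b) := add_comm b a ▸ weight_nonneg b a (mul_comm a b ▸ hab)
  have hpq : a / (a + b) + b / (a + b) = 1 := by rw [← add_div, div_self hs]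
  -- `x + a` and `x + b` are the convex combinations of `x + (a + b)` and `x` with swapped weights
  have h₁ := hφ.2 (Set.mem_univ (x + (a + b))) (Set.mem_univ x) hp hq hpq
  have h₂ := hφ.2 (Set.mem_univ (x + (a + b))) (Set.mem_univ x) hq hp (by linarith)
  simp only [smul_eq_mul] at h₁ h₂
  have e₁ : a / (a + b) * (x + (a + b)) + b / (a + b) * x = x + a := by field_simp; ring
  have e₂ : b / (a + b) * (x + (a + b)) + a / (a + b) * x = x + b := by field_simp; ring
  rw [e₁] at h₁
  rw [e₂] at h₂
  linear_combination h₁ + h₂ + (φ (x + (a + b)) + φ x) * hpq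

theorem ConvexOn.sum_map_add_sub_le {φ : ℝ → ℝ} (hφ : ConvexOn ℝ Set.univ φ) (x : ℝ)
    {κ : Type*} {T : Finset κ} {t : κ → ℝ} (ht : ∀ k ∈ T, ∀ k' ∈ T, 0 ≤ t k * t k') :
    ∑ k ∈ T, (φ (x + t k) - φ x) ≤ φ (x + ∑ k ∈ T, t k) - φ x := by
  classical
  induction T using Finset.induction_on with
  | empty => simp
  | insert k T hk ih =>
    have hT : ∀ i ∈ T, ∀ i' ∈ T, 0 ≤ t i * t i' := fun i hi i' hi' =>
      ht i (mem_insert_of_mem hi) i' (mem_insert_of_mem hi')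
    have hkT : 0 ≤ t k * ∑ i ∈ T, t i := mul_sum T t (t k) ▸
      sum_nonneg fun i hi => ht k (mem_insert_self k T) i (mem_insert_of_mem hi)
    rw [sum_insert hk, sum_insert hk]
    linarith [ih hT, hφ.map_add_add_le x hkT]

theorem sum_separable_sub_le_sum {ι κ : Type*} [Fintype ι] {f : ι → ℝ → ℝ}
    (hf : ∀ j, ConvexOn ℝ Set.univ (f j)) (z : ι → ℤ) {T : Finset κ} {x : κ → ι → ℤ}
    (hx : ∀ k ∈ T, ∀ k' ∈ T, SignCompat (x k) (x k')) :
    ∑ j, f j (z j : ℝ) - ∑ j, f j ((z + ∑ k ∈ T, x k) j : ℝ) ≤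
      ∑ k ∈ T, (∑ j, f j (z j : ℝ) - ∑ j, f j ((z + x k) j : ℝ)) := by
  have key := fun j => (hf j).sum_map_add_sub_le (z j) (t := fun k => (x k j : ℝ))
    fun k hk k' hk' => by exact_mod_cast hx k hk k' hk' j
  have := sum_le_sum fun j (_ : j ∈ univ) => key j
  rw [sum_comm] at this
  simp only [Pi.add_apply, Finset.sum_apply, Int.cast_add, Int.cast_sum]
  simp only [sum_sub_distrib] at this ⊢
  linarith

end Superadditivity

theorem IsCompact.exists_mem_extremePoints_isMaxOn {E : Type*} [AddCommGroup E] [Module ℝ E]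
    [TopologicalSpace E] [T2Space E] [IsTopologicalAddGroup E] [ContinuousSMul ℝ E]
    [LocallyConvexSpace ℝ E] {s : Set E} (hs : IsCompact s) (hne : s.Nonempty)
    (l : StrongDual ℝ E) : ∃ x ∈ s.extremePoints ℝ, IsMaxOn l s x := by
  obtain ⟨z, hz, hzmax⟩ := hs.exists_isMaxOn hne l.continuous.continuousOn
  have hface : IsExposed ℝ s (l.toExposed s) := ContinuousLinearMap.toExposed.isExposed
  obtain ⟨x, hx⟩ := (hface.isCompact hs).extremePoints_nonempty ⟨z, hz, hzmax⟩
  exact ⟨x, hface.isExtreme.extremePoints_subset_extremePoints hx, hx.1.2⟩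

section ConicCoeffs

open Filter Topology

variable {κ E : Type*} [Fintype κ] [AddCommGroup E] [Module ℝ E]

def conicCoeffs (v : κ → E) (w : E) : Set (κ → ℝ) := {μ | 0 ≤ μ ∧ ∑ k, μ k • v k = w}

theorem add_mem_conicCoeffs {v : κ → E} {w : E} {μ d : κ → ℝ} (hμ : μ ∈ conicCoeffs v w)
    (hd : ∑ k, d k • v k = 0) (hμd : 0 ≤ μ + d) : μ + d ∈ conicCoeffs v w :=
  ⟨hμd, by simp only [Pi.add_apply, add_smul, sum_add_distrib, hμ.2, hd, add_zero]⟩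

theorem linearIndepOn_of_mem_extremePoints_conicCoeffs {v : κ → E} {w : E} {μ : κ → ℝ}
    (hμ : μ ∈ (conicCoeffs v w).extremePoints ℝ) : LinearIndepOn ℝ v {k | μ k ≠ 0} := by
  rw [linearIndepOn_iff]
  intro d hd hdv
  rw [Finsupp.mem_supported'] at hd
  rw [Finsupp.linearCombination_apply, Finsupp.sum_fintype _ _ (by simp)] at hdv
  -- `μ ± ε d` stay nonnegative for small `ε`, since `d` vanishes off the support of `μ`
  have hsmall : ∀ᶠ ε in 𝓝 (0 : ℝ), ∀ k, 0 ≤ μ k + ε * d k ∧ 0 ≤ μ k + -ε * d k := by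
    refine eventually_all.2 fun k => ?_
    by_cases hk : μ k = 0
    · simp [hd k (by simpa using hk), hk]
    have hpos : 0 < μ k := lt_of_le_of_ne (hμ.1.1 k) (Ne.symm hk)
    have h₁ := (show Continuous fun ε : ℝ => μ k + ε * d k by fun_prop).tendsto' 0 (μ k) (by simp)
    have h₂ := (show Continuous fun ε : ℝ => μ k + -ε * d k by fun_prop).tendsto' 0 (μ k) (by simp)
    exact (h₁.eventually_const_le hpos).and (h₂.eventually_const_le hpos)
  obtain ⟨ε, hε, hε0⟩ := ((hsmall.filter_mono nhdsWithin_le_nhds).and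
    (self_mem_nhdsWithin : ∀ᶠ ε in 𝓝[>] (0 : ℝ), 0 < ε)).exists
  have hεd : ∀ ε : ℝ, ∑ k, (ε • ⇑d) k • v k = 0 := fun ε => by
    simp only [Pi.smul_apply, smul_eq_mul, mul_smul, ← smul_sum, hdv, smul_zero]
  have h₁ := add_mem_conicCoeffs hμ.1 (hεd ε) fun k => (hε k).1
  have h₂ := add_mem_conicCoeffs hμ.1 (hεd (-ε)) fun k => (hε k).2
  have hseg : μ ∈ openSegment ℝ (μ + ε • ⇑d) (μ + (-ε) • ⇑d) :=
    ⟨1 / 2, 1 / 2, by norm_num, by norm_num, by norm_num, by ext; simp; ring⟩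
  have : ε • ⇑d = 0 := add_eq_left.1 (hμ.2 h₁ h₂ hseg)
  ext k
  simpa [hε0.ne'] using congrFun this k

theorem isClosed_conicCoeffs [TopologicalSpace E] [T2Space E] [ContinuousAdd E]
    [ContinuousSMul ℝ E] (v : κ → E) (w : E) : IsClosed (conicCoeffs v w) :=
  (isClosed_le continuous_const continuous_id).inter <| isClosed_eq
    (continuous_finsetSum _ fun k _ => (continuous_apply k).smul continuous_const)
    continuous_const

end ConicCoeffs

theorem sum_sub_natFloor_lt_card {κ : Type*} [Fintype κ] {μ : κ → ℝ} (hμ : μ ≠ 0) :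
    ∑ k, (μ k - ⌊μ k⌋₊) < #{k | μ k ≠ 0} := by
  obtain ⟨k₀, hk₀⟩ := Function.ne_iff.1 hμ
  have hsupp : ∑ k with μ k ≠ 0, (μ k - ⌊μ k⌋₊) = ∑ k, (μ k - ⌊μ k⌋₊) :=
    sum_filter_of_ne fun k _ hne hzero => hne (by simp [hzero])
  rw [← hsupp, card_eq_sum_ones, Nat.cast_sum, Nat.cast_one]
  exact sum_lt_sum_of_nonempty ⟨k₀, by simpa using hk₀⟩ fun k _ => by
    linarith [Nat.sub_one_lt_floor (μ k)]

section GraverDecomposition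

variable {ι R : Type*} [Fintype ι] {A : Matrix R ι ℤ} {w : ι → ℤ}

theorem IsCycle.sub {x y : ι → ℤ} (hx : IsCycle A x) (hy : IsCycle A y) : IsCycle A (x - y) := by
  rw [IsCycle, Matrix.mulVec_sub, hx, hy, sub_zero]

theorem IsCycle.smul {x : ι → ℤ} (hx : IsCycle A x) (c : ℤ) : IsCycle A (c • x) := by
  rw [IsCycle, Matrix.mulVec_smul, hx, smul_zero]

theorem IsCycle.multiset_sum {m : Multiset (ι → ℤ)} (hm : ∀ g ∈ m, IsCycle A g) :
    IsCycle A m.sum := by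
  rw [IsCycle, ← Matrix.mulVecLin_apply, map_multiset_sum]
  refine Multiset.sum_eq_zero fun x hx => ?_
  obtain ⟨g, hg, rfl⟩ := Multiset.mem_map.1 hx
  exact hm g hg

variable (A w) in
noncomputable def conformalGraver : Finset (ι → ℤ) :=
  ((IsConformal.finite_setOf w).subset fun _ hg => hg.2 :
    {g | InGraverBasis A g ∧ g ⊑ w}.Finite).toFinset

theorem mem_conformalGraver {g : ι → ℤ} :
    g ∈ conformalGraver A w ↔ InGraverBasis A g ∧ g ⊑ w :=
  Set.Finite.mem_toFinset _

variable (A w) in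
def fractionalDecompositions : Set (conformalGraver A w → ℝ) :=
  conicCoeffs (fun g => (Int.cast ∘ g.1 : ι → ℝ)) (Int.cast ∘ w)

theorem mem_fractionalDecompositions {μ : conformalGraver A w → ℝ} :
    μ ∈ fractionalDecompositions A w ↔ 0 ≤ μ ∧ ∀ i, ∑ g, μ g * (g.1 i : ℝ) = w i := by
  simp [fractionalDecompositions, conicCoeffs, funext_iff, Finset.sum_apply]

theorem count_mem_fractionalDecompositions {m : Multiset (ι → ℤ)}
    (hm : ∀ g ∈ m, InGraverBasis A g ∧ g ⊑ w) (hsum : m.sum = w) :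
    (fun g : conformalGraver A w => (m.count g.1 : ℝ)) ∈ fractionalDecompositions A w := by
  refine mem_fractionalDecompositions.2 ⟨fun g => Nat.cast_nonneg _, fun i => ?_⟩
  have hsub : m.toFinset ⊆ conformalGraver A w := fun g hg =>
    mem_conformalGraver.2 (hm g (Multiset.mem_toFinset.1 hg))
  conv_rhs => rw [← hsum, sum_multiset_count_of_subset m _ hsub]
  simpa using sum_coe_sort (conformalGraver A w) fun g => (m.count g : ℝ) * (g i : ℝ)

theorem sum_count_conformalGraver {m : Multiset (ι → ℤ)}
    (hm : ∀ g ∈ m, InGraverBasis A g ∧ g ⊑ w) :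
    ∑ g : conformalGraver A w, m.count g.1 = Multiset.card m := by
  rw [sum_coe_sort (conformalGraver A w) fun g => m.count g]
  exact Multiset.sum_count_eq_card fun g hg => mem_conformalGraver.2 (hm g hg)

theorem sum_le_of_mem_fractionalDecompositions {μ : conformalGraver A w → ℝ}
    (hμ : μ ∈ fractionalDecompositions A w) : ∑ g, μ g ≤ ∑ i, |(w i : ℝ)| := by
  rw [mem_fractionalDecompositions] at hμ
  -- pairing with the sign pattern of `w` gives the `ℓ¹`-norm on vectors conformal to `w`
  have hg : ∀ g : conformalGraver A w, 1 ≤ ∑ i, ((w i).sign : ℝ) * g.1 i := fun g => by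
    obtain ⟨hgG, hgw⟩ := mem_conformalGraver.1 g.2
    have := one_le_sum_abs hgG.2.1
    rw [← sum_congr rfl fun i _ => hgw.sign_mul_eq_abs i] at this
    exact_mod_cast this
  calc ∑ g, μ g ≤ ∑ g, μ g * ∑ i, ((w i).sign : ℝ) * g.1 i :=
        sum_le_sum fun g _ => le_mul_of_one_le_right (hμ.1 g) (hg g)
    _ = ∑ i, ((w i).sign : ℝ) * w i := by
        simp_rw [← hμ.2, mul_sum]
        rw [sum_comm]
        exact sum_congr rfl fun i _ => sum_congr rfl fun g _ => by ring
    _ = ∑ i, |(w i : ℝ)| := by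
        exact_mod_cast sum_congr rfl fun i _ => Int.sign_mul_self_eq_abs (w i)

theorem isCompact_fractionalDecompositions : IsCompact (fractionalDecompositions A w) :=
  isCompact_Icc.of_isClosed_subset (isClosed_conicCoeffs _ _) fun _ hμ =>
    ⟨hμ.1, fun g => (single_le_sum (fun g _ => hμ.1 g) (mem_univ g)).trans
      (sum_le_of_mem_fractionalDecompositions (w := w) hμ)⟩

theorem exists_isMaxOn_card_support_le (hw : IsCycle A w) :
    ∃ μ ∈ fractionalDecompositions A w,
      IsMaxOn (fun μ => ∑ g, μ g) (fractionalDecompositions A w) μ ∧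
        #{g | μ g ≠ 0} ≤ Fintype.card ι := by
  obtain ⟨m, hm, hsum⟩ := exists_graver_decomposition A hw
  obtain ⟨μ, hμ, hmax⟩ := isCompact_fractionalDecompositions.exists_mem_extremePoints_isMaxOn
    ⟨_, count_mem_fractionalDecompositions hm hsum⟩ (∑ g, ContinuousLinearMap.proj g)
  refine ⟨μ, hμ.1, fun ν hν => by simpa using hmax hν, ?_⟩
  have := (linearIndepOn_of_mem_extremePoints_conicCoeffs hμ).fintype_card_le_finrank
  simpa [Module.finrank_fintype_fun_eq_card, Fintype.card_subtype] using this

theorem exists_floor_decomposition {μ : conformalGraver A w → ℝ}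
    (hμ : μ ∈ fractionalDecompositions A w) :
    ∃ m : Multiset (ι → ℤ), (∀ g ∈ m, InGraverBasis A g ∧ g ⊑ w) ∧ m.sum ⊑ w ∧
      (Multiset.card m : ℝ) = ∑ g, (⌊μ g⌋₊ : ℝ) ∧ #m.toFinset ≤ #{g | μ g ≠ 0} := by
  rw [mem_fractionalDecompositions] at hμ
  refine ⟨∑ g, ⌊μ g⌋₊ • {g.1}, fun g hg => ?_, fun i => ?_, by simp [Multiset.card_sum], ?_⟩
  · obtain ⟨h, -, hh⟩ := Multiset.mem_sum.1 hg
    rw [Multiset.mem_singleton.1 (Multiset.mem_nsmul.1 hh).2]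
    exact mem_conformalGraver.1 h.2
  · have := sum_mul_mem_uIcc_zero (s := univ) (a := fun g => (⌊μ g⌋₊ : ℝ))
      (x := fun g => (g.1 i : ℝ)) (fun g _ => ⟨Nat.cast_nonneg _, Nat.floor_le (hμ.1 g)⟩)
      (fun g _ => by simpa [Set.mem_uIcc] using (mem_conformalGraver.1 g.2).2 i) (hμ.2 i)
    rw [Multiset.sum_sum]
    simp only [Multiset.sum_nsmul, Multiset.sum_singleton, Finset.sum_apply, nsmul_eq_mul]
    rw [Set.mem_uIcc] at this ⊢
    exact_mod_cast this
  · refine (card_le_card fun g hg => ?_).trans (card_image_le (f := Subtype.val))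
    obtain ⟨h, -, hh⟩ := Multiset.mem_sum.1 (Multiset.mem_toFinset.1 hg)
    obtain ⟨hne, hgh⟩ := Multiset.mem_nsmul.1 hh
    rw [Multiset.mem_singleton.1 hgh]
    exact mem_image_of_mem _ (mem_filter.2 ⟨mem_univ _, fun h0 => hne (by simp [h0])⟩)

theorem exists_graver_decomposition_card_toFinset_lt (hw : IsCycle A w)
    {μ : conformalGraver A w → ℝ} (hμ : μ ∈ fractionalDecompositions A w)
    (hmax : IsMaxOn (fun μ => ∑ g, μ g) (fractionalDecompositions A w) μ) (hμ0 : μ ≠ 0) :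
    ∃ m : Multiset (ι → ℤ), (∀ g ∈ m, InGraverBasis A g ∧ g ⊑ w) ∧ m.sum = w ∧
      #m.toFinset < 2 * #{g | μ g ≠ 0} := by
  obtain ⟨m₁, hm₁, hm₁w, hcard₁, hsupp₁⟩ := exists_floor_decomposition hμ
  obtain ⟨m₂, hm₂, hsum₂⟩ :=
    exists_graver_decomposition A (hw.sub (IsCycle.multiset_sum fun g hg => (hm₁ g hg).1.1))
  have hm : ∀ g ∈ m₁ + m₂, InGraverBasis A g ∧ g ⊑ w := fun g hg =>
    (Multiset.mem_add.1 hg).elim (hm₁ g) fun hg => ⟨(hm₂ g hg).1, (hm₂ g hg).2.trans hm₁w.sub_left⟩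
  have hsum : (m₁ + m₂).sum = w := by rw [Multiset.sum_add, hsum₂, add_sub_cancel]
  -- `μ` beats the integral decomposition `m₁ + m₂`, while `m₁` is `μ` rounded down
  have hopt : (Multiset.card (m₁ + m₂) : ℝ) ≤ ∑ g, μ g := by
    rw [← sum_count_conformalGraver hm, Nat.cast_sum]
    exact hmax (count_mem_fractionalDecompositions hm hsum)
  have hcard₂ : Multiset.card m₂ < #{g | μ g ≠ 0} := by
    have := sum_sub_natFloor_lt_card hμ0
    rw [sum_sub_distrib, ← hcard₁] at this
    rw [Multiset.card_add, Nat.cast_add] at hopt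
    exact_mod_cast (by linarith : (Multiset.card m₂ : ℝ) < #{g | μ g ≠ 0})
  refine ⟨m₁ + m₂, hm, hsum, ?_⟩
  calc #(m₁ + m₂).toFinset ≤ #m₁.toFinset + #m₂.toFinset := by
        rw [Multiset.toFinset_add]; exact card_union_le _ _
    _ ≤ #{g | μ g ≠ 0} + Multiset.card m₂ := add_le_add hsupp₁ (Multiset.toFinset_card_le m₂)
    _ < 2 * #{g | μ g ≠ 0} := by omega

theorem exists_graver_decomposition_card_toFinset_lt_two_mul (hw : IsCycle A w) (hw0 : w ≠ 0) :
    ∃ m : Multiset (ι → ℤ), (∀ g ∈ m, InGraverBasis A g ∧ g ⊑ w) ∧ m.sum = w ∧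
      #m.toFinset < 2 * Fintype.card ι := by
  obtain ⟨μ, hμ, hmax, hcard⟩ := exists_isMaxOn_card_support_le hw
  have hμ0 : μ ≠ 0 := by
    rintro rfl
    refine hw0 (funext fun i => ?_)
    simpa [eq_comm] using (mem_fractionalDecompositions.1 hμ).2 i
  obtain ⟨m, hm, hsum, hlt⟩ := exists_graver_decomposition_card_toFinset_lt hw hμ hmax hμ0
  exact ⟨m, hm, hsum, hlt.trans_le (by omega)⟩

end GraverDecomposition

theorem IsFeasibleZ.add_of_isConformal {m n : ℕ} {A : Matrix (Fin m) (Fin n) ℤ} {b : Fin m → ℤ}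
    {l u x y d : Fin n → ℤ} (hx : IsFeasibleZ A b l u x) (hy : IsFeasibleZ A b l u y)
    (hd : IsCycle A d) (hdc : d ⊑ y - x) : IsFeasibleZ A b l u (x + d) := by
  refine ⟨by rw [Matrix.mulVec_add, hx.1, hd, add_zero], fun j => ?_⟩
  have hmem : x j + d j ∈ Set.uIcc (x j) (y j) := by
    have := hdc j
    rw [Set.mem_uIcc] at this ⊢
    simp only [Pi.sub_apply] at this
    omega
  exact Set.uIcc_subset_Icc ⟨(hx.2 j).1, (hx.2 j).2⟩ ⟨(hy.2 j).1, (hy.2 j).2⟩ hmem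

theorem Finset.exists_div_le_of_le_sum {κ : Type*} {T : Finset κ} (hT : T.Nonempty)
    {c : κ → ℝ} {G N : ℝ} (hG : 0 ≤ G) (hN : (#T : ℝ) ≤ N) (h : G ≤ ∑ k ∈ T, c k) :
    ∃ k ∈ T, G / N ≤ c k := by
  have hN0 : 0 < N := (Nat.cast_pos.2 hT.card_pos).trans_le hN
  refine exists_le_of_sum_le hT (le_trans ?_ h)
  rw [sum_const, nsmul_eq_mul]
  calc (#T : ℝ) * (G / N) ≤ N * (G / N) := mul_le_mul_of_nonneg_right hN (div_nonneg hG hN0.le)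
    _ = G := mul_div_cancel₀ G hN0.ne'

theorem convex_augmenting_graver_step_general (m n : ℕ)
    (A : Matrix (Fin m) (Fin n) ℤ) (b : Fin m → ℤ) (l u : Fin n → ℤ)
    (f : Fin n → ℝ → ℝ) (hf : ∀ j, ConvexOn ℝ Set.univ (f j))
    (z0 zs : Fin n → ℤ)
    (hz0 : IsFeasibleZ A b l u z0)
    (hzs : IsFeasibleZ A b l u zs)
    (hlt : ∑ j, f j ((zs j : ℝ)) < ∑ j, f j ((z0 j : ℝ))) :
    ∃ (y : Fin n → ℤ) (lam : ℕ), InGraverBasis A y ∧ 0 < lam ∧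
      IsFeasibleZ A b l u (z0 + (lam : ℤ) • y) ∧
      ((∑ j, f j ((z0 j : ℝ))) - ∑ j, f j ((zs j : ℝ))) / (2 * (n : ℝ)) ≤
        (∑ j, f j ((z0 j : ℝ))) - ∑ j, f j (((z0 + (lam : ℤ) • y) j : ℝ)) := by
  have hw : IsCycle A (zs - z0) := by rw [IsCycle, Matrix.mulVec_sub, hzs.1, hz0.1, sub_self]
  have hw0 : zs - z0 ≠ 0 := fun h => hlt.ne (by rw [sub_eq_zero.1 h])
  obtain ⟨s, hs, hsum, hcard⟩ := exists_graver_decomposition_card_toFinset_lt_two_mul hw hw0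
  have hs' : ∀ g ∈ s.toFinset, InGraverBasis A g ∧ g ⊑ zs - z0 := fun g hg =>
    hs g (Multiset.mem_toFinset.1 hg)
  have hsc : ∀ g ∈ s.toFinset, ∀ g' ∈ s.toFinset,
      SignCompat ((s.count g : ℤ) • g) ((s.count g' : ℤ) • g') := fun g hg g' hg' =>
    ((hs' g hg).2.signCompat (hs' g' hg').2).smul (Nat.cast_nonneg _) (Nat.cast_nonneg _)
  have hpieces : ∑ g ∈ s.toFinset, (s.count g : ℤ) • g = zs - z0 := by
    simp only [natCast_zsmul, ← sum_multiset_count, hsum]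
  have hgain := sum_separable_sub_le_sum hf z0 hsc
  rw [hpieces, add_sub_cancel] at hgain
  have hne : s.toFinset.Nonempty :=
    Multiset.toFinset_nonempty.2 fun h => hw0 (by rw [← hsum, h, Multiset.sum_zero])
  have hcard' : (#s.toFinset : ℝ) ≤ 2 * n := by
    exact_mod_cast (Fintype.card_fin n ▸ hcard).le
  obtain ⟨g, hg, hbound⟩ := exists_div_le_of_le_sum hne (sub_nonneg.2 hlt.le) hcard' hgain
  have hfeas := hz0.add_of_isConformal hzs ((hs' g hg).1.1.smul _)
    (hpieces ▸ isConformal_of_sum_eq hsc hg)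
  exact ⟨g, s.count g, (hs' g hg).1, Multiset.count_pos.2 (Multiset.mem_toFinset.1 hg), hfeas,
    hbound⟩

/-- For the IP `min{f(x) : Ax = b, l ≤ x ≤ u, x ∈ ℤⁿ}` with finite bounds and a
separable convex objective `f(x) = Σ_j f_j(x_j)`, given a feasible `z₀` and an
optimal `z*` with `f(z₀) > f(z*)`, there are a Graver basis element `y` and a
positive integer `λ` such that `z₀ + λy` is feasible and
`f(z₀) − f(z₀ + λy) ≥ (f(z₀) − f(z*))/(2n)`. -/
theorem convex_augmenting_graver_step (m n : ℕ)
    (A : Matrix (Fin m) (Fin n) ℤ) (b : Fin m → ℤ) (l u : Fin n → ℤ)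
    (f : Fin n → ℝ → ℝ) (hf : ∀ j, ConvexOn ℝ Set.univ (f j))
    (z0 zs : Fin n → ℤ)
    (hz0 : IsFeasibleZ A b l u z0)
    (hzs : IsFeasibleZ A b l u zs)
    (hopt : ∀ z, IsFeasibleZ A b l u z →
      ∑ j, f j ((zs j : ℝ)) ≤ ∑ j, f j ((z j : ℝ)))
    (hlt : ∑ j, f j ((zs j : ℝ)) < ∑ j, f j ((z0 j : ℝ))) :
    ∃ (y : Fin n → ℤ) (lam : ℕ), InGraverBasis A y ∧ 0 < lam ∧
      IsFeasibleZ A b l u (z0 + (lam : ℤ) • y) ∧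
      ((∑ j, f j ((z0 j : ℝ))) - ∑ j, f j ((zs j : ℝ))) / (2 * (n : ℝ)) ≤
        (∑ j, f j ((z0 j : ℝ))) - ∑ j, f j (((z0 + (lam : ℤ) • y) j : ℝ)) :=
  convex_augmenting_graver_step_general m n A b l u f hf z0 zs hz0 hzs hlt
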